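/- arXiv:2404.07881 — 2 statements merged into one kernel-verified Lean document; each statement's English description precedes it below -/
import Mathlib

section
/- Suppose A satisfies the matrix model. Then for every proper Fourier diagram α other than the singleton root and every i ∈ [n], E[Z_{α,i}] = 0 and E[Z_{α,i}²] = |Aut(α)| · (n−1)(n−2)⋯(n−|V(α)|+1) / n^{|E(α)|}. -/
set_option linter.unusedVariables false

open scoped Classical BigOperators

noncomputable section

/-! ### Fourier diagrams

A Fourier diagram is a finite rooted multigraph, possibly carrying additional
"2-labeled" edges (`edges2`).  A plain (unlabeled) Fourier diagram is one with
`edges2 = 0`. -/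

structure Diagram where
  V : Type
  fintypeV : Fintype V
  decEqV : DecidableEq V
  root : V
  edges : Multiset (Sym2 V)
  edges2 : Multiset (Sym2 V)

attribute [instance] Diagram.fintypeV Diagram.decEqV

/-- Symmetrized evaluation of a matrix entry on an unordered pair (agrees with
`A (φ a) (φ b)` whenever `A` is symmetric). -/
def sym2val {V : Type} {N : ℕ} (A : Matrix (Fin N) (Fin N) ℝ) (φ : V → Fin N) : Sym2 V → ℝ :=
  Sym2.lift ⟨fun a b => (A (φ a) (φ b) + A (φ b) (φ a)) / 2, fun a b => by ring⟩

/-- Entry `i` of the vector `Z_α`: the sum over injective embeddings `φ` of the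
vertices with `φ(root) = i` of the product of matrix entries over the edges
(a 2-labeled edge contributes `A² - 1/N`). -/
def Zv {N : ℕ} (A : Matrix (Fin N) (Fin N) ℝ) (α : Diagram) (i : Fin N) : ℝ :=
  ∑ φ : α.V → Fin N,
    if Function.Injective φ ∧ φ α.root = i then
      (α.edges.map (sym2val A φ)).prod *
        (α.edges2.map fun e => sym2val A φ e ^ 2 - 1 / (N : ℝ)).prod
    else 0

namespace Diagram

/-- All edges, with 2-labeled edges counted once. -/
def allE (α : Diagram) : Multiset (Sym2 α.V) := α.edges + α.edges2

/-- No vertex other than the root is isolated. -/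
def NoIsolated (α : Diagram) : Prop := ∀ v : α.V, v ≠ α.root → ∃ e ∈ α.allE, v ∈ e

/-- `|E(α)|`, counting 2-labeled edges twice. -/
def nE (α : Diagram) : ℕ := Multiset.card α.edges + 2 * Multiset.card α.edges2

/-- `I(α)`: non-root vertices all of whose incident edges have multiplicity `≥ 2`
or are self-loops (2-labeled edges being treated as single ordinary edges). -/
def I (α : Diagram) : Finset α.V :=
  Finset.univ.filter fun v =>
    v ≠ α.root ∧ ∀ e ∈ α.allE, v ∈ e → (2 ≤ α.allE.count e ∨ e.IsDiag)

/-- The combinatorial quantity `|V(α)| - 1 - |E(α)| + |I(α)|`. -/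
def Dval (α : Diagram) : ℤ :=
  (Fintype.card α.V : ℤ) - 1 - (α.nE : ℤ) + (α.I.card : ℤ)

/-- The underlying simple graph of a diagram. -/
def graph (α : Diagram) : SimpleGraph α.V := SimpleGraph.fromEdgeSet {e | e ∈ α.allE}

/-- Connectivity of the diagram (as a multigraph). -/
def Conn (α : Diagram) : Prop := α.graph.Connected

/-- A proper diagram: no repeated edges, no self-loops and no 2-labeled edges. -/
def Proper (α : Diagram) : Prop :=
  α.edges.Nodup ∧ (∀ e ∈ α.edges, ¬ e.IsDiag) ∧ α.edges2 = 0

/-- A (rooted) tree diagram: an element of `𝒯`. -/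
def IsTree (α : Diagram) : Prop := α.Proper ∧ α.graph.Connected ∧ α.graph.IsAcyclic

/-- Degree of the root (as a multigraph). -/
def rootDeg (α : Diagram) : ℕ := Multiset.card (α.edges.filter fun e => α.root ∈ e)

/-- Membership in `𝒮`: a rooted tree whose root has degree exactly 1. -/
def InS (α : Diagram) : Prop := α.IsTree ∧ α.rootDeg = 1

/-- The root has degree exactly one, with (unique) neighbour `c`. -/
def RootDeg1 (α : Diagram) : Prop :=
  ∃ c : α.V, c ≠ α.root ∧ α.edges.filter (fun e => α.root ∈ e) = {s(α.root, c)}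

end Diagram

/-- Isomorphism of rooted diagrams. -/
def DiagIso (α β : Diagram) : Prop :=
  ∃ g : α.V ≃ β.V, g α.root = β.root ∧ α.edges.map (Sym2.map ⇑g) = β.edges ∧
    α.edges2.map (Sym2.map ⇑g) = β.edges2

/-- `|Aut(α)|`: the number of root-fixing automorphisms of `α`. -/
def autCard (α : Diagram) : ℕ :=
  Nat.card {g : Equiv.Perm α.V // g α.root = α.root ∧
    α.edges.map (Sym2.map ⇑g) = α.edges ∧ α.edges2.map (Sym2.map ⇑g) = α.edges2}

/-! ### Combinatorial negligibility and asymptotic equality `≐` -/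

/-- `a = Θ(n^{-j/2})`. -/
def IsThetaHalf (a : ℕ → ℝ) (j : ℕ) : Prop :=
  ∃ c₁ c₂ : ℝ, 0 < c₁ ∧ 0 < c₂ ∧ ∀ n : ℕ, 1 ≤ n →
    c₁ * (n : ℝ) ^ (-(j : ℝ) / 2) ≤ |a n| ∧ |a n| ≤ c₂ * (n : ℝ) ^ (-(j : ℝ) / 2)

/-- The term `a_n · Z_α` is combinatorially negligible. -/
def NegligibleTerm (a : ℕ → ℝ) (α : Diagram) : Prop :=
  (∀ n, a n = 0) ∨ ∃ j : ℕ, IsThetaHalf a j ∧ α.Dval ≤ (j : ℤ) - 1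

/-- The term `a_n · Z_α` has combinatorial order 1. -/
def Order1Term (a : ℕ → ℝ) (α : Diagram) : Prop :=
  ∃ j : ℕ, IsThetaHalf a j ∧ α.Dval = (j : ℤ)

/-- A (vector-valued) diagram expression: a finite sum of terms `a_n · Z_α`. -/
abbrev DiagExpr : Type 1 := List ((ℕ → ℝ) × Diagram)

def DiagExpr.eval (z : DiagExpr) {N : ℕ} (A : Matrix (Fin N) (Fin N) ℝ) (i : Fin N) : ℝ :=
  (z.map fun p => p.1 N * Zv A p.2 i).sum

def DiagExpr.Negligible (z : DiagExpr) : Prop := ∀ p ∈ z, NegligibleTerm p.1 p.2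

/-- Asymptotic equality `x ≐ y` of two vector-valued quantities: the difference is
(identically, for every symmetric input matrix) a sum of combinatorially
negligible diagram terms. -/
def AsympEqV (x y : (N : ℕ) → Matrix (Fin N) (Fin N) ℝ → Fin N → ℝ) : Prop :=
  ∃ z : DiagExpr, DiagExpr.Negligible z ∧
    ∀ (N : ℕ) (A : Matrix (Fin N) (Fin N) ℝ), A.IsSymm → ∀ i : Fin N,
      x N A i - y N A i = DiagExpr.eval z A i

/-- `≐` for diagram expressions. -/
def AsympEqE (x y : DiagExpr) : Prop :=
  AsympEqV (fun _ A i => DiagExpr.eval x A i) (fun _ A i => DiagExpr.eval y A i)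

/-! ### Scalar diagrams -/

structure SDiagram where
  V : Type
  fintypeV : Fintype V
  decEqV : DecidableEq V
  edges : Multiset (Sym2 V)
  edges2 : Multiset (Sym2 V)

attribute [instance] SDiagram.fintypeV SDiagram.decEqV

def Zs {N : ℕ} (A : Matrix (Fin N) (Fin N) ℝ) (α : SDiagram) : ℝ :=
  ∑ φ : α.V → Fin N,
    if Function.Injective φ then
      (α.edges.map (sym2val A φ)).prod *
        (α.edges2.map fun e => sym2val A φ e ^ 2 - 1 / (N : ℝ)).prod
    else 0

namespace SDiagram

def allE (α : SDiagram) : Multiset (Sym2 α.V) := α.edges + α.edges2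
def NoIsolated (α : SDiagram) : Prop := ∀ v : α.V, ∃ e ∈ α.allE, v ∈ e
def nE (α : SDiagram) : ℕ := Multiset.card α.edges + 2 * Multiset.card α.edges2
def I (α : SDiagram) : Finset α.V :=
  Finset.univ.filter fun v => ∀ e ∈ α.allE, v ∈ e → (2 ≤ α.allE.count e ∨ e.IsDiag)
def Dval (α : SDiagram) : ℤ := (Fintype.card α.V : ℤ) - (α.nE : ℤ) + (α.I.card : ℤ)
def graph (α : SDiagram) : SimpleGraph α.V := SimpleGraph.fromEdgeSet {e | e ∈ α.allE}
def Proper (α : SDiagram) : Prop :=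
  α.edges.Nodup ∧ (∀ e ∈ α.edges, ¬ e.IsDiag) ∧ α.edges2 = 0
def IsTree (α : SDiagram) : Prop := α.Proper ∧ α.graph.Connected ∧ α.graph.IsAcyclic

end SDiagram

def SDiagIso (α β : SDiagram) : Prop :=
  ∃ g : α.V ≃ β.V, α.edges.map (Sym2.map ⇑g) = β.edges ∧
    α.edges2.map (Sym2.map ⇑g) = β.edges2

def autCardS (α : SDiagram) : ℕ :=
  Nat.card {g : Equiv.Perm α.V //
    α.edges.map (Sym2.map ⇑g) = α.edges ∧ α.edges2.map (Sym2.map ⇑g) = α.edges2}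

def NegligibleTermS (a : ℕ → ℝ) (α : SDiagram) : Prop :=
  (∀ n, a n = 0) ∨ ∃ j : ℕ, IsThetaHalf a j ∧ α.Dval ≤ (j : ℤ) - 1

abbrev SDiagExpr : Type 1 := List ((ℕ → ℝ) × SDiagram)

def SDiagExpr.eval (z : SDiagExpr) {N : ℕ} (A : Matrix (Fin N) (Fin N) ℝ) : ℝ :=
  (z.map fun p => p.1 N * Zs A p.2).sum

def SDiagExpr.Negligible (z : SDiagExpr) : Prop := ∀ p ∈ z, NegligibleTermS p.1 p.2

/-- Asymptotic equality `x ≐ y` of two scalar quantities. -/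
def AsympEqS (x y : (N : ℕ) → Matrix (Fin N) (Fin N) ℝ → ℝ) : Prop :=
  ∃ z : SDiagExpr, SDiagExpr.Negligible z ∧
    ∀ (N : ℕ) (A : Matrix (Fin N) (Fin N) ℝ), A.IsSymm → x N A - y N A = SDiagExpr.eval z A

/-! ### The Wigner matrix model -/

/-- Subgaussian distribution on `ℝ` (definition from the paper). -/
def Subgaussian (μ : MeasureTheory.Measure ℝ) : Prop :=
  ∃ C : ℝ, 0 < C ∧ ∀ q : ℕ, ∫ x, |x| ^ q ∂μ ≤ C ^ q * (q : ℝ) ^ ((q : ℝ) / 2)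

/-- The matrix model: `A(n)` is a random symmetric `n × n` matrix whose entries are
independent up to symmetry, with `√n · A_{ii} ~ μ₀` and `√n · A_{ij} ~ μ` (`i ≠ j`),
where `μ, μ₀` are subgaussian, centered, and `μ` has unit variance. -/
structure MatrixModel where
  Ω : Type
  [mΩ : MeasurableSpace Ω]
  P : MeasureTheory.Measure Ω
  [probP : MeasureTheory.IsProbabilityMeasure P]
  μ : MeasureTheory.Measure ℝ
  μ₀ : MeasureTheory.Measure ℝ
  [probμ : MeasureTheory.IsProbabilityMeasure μ]
  [probμ₀ : MeasureTheory.IsProbabilityMeasure μ₀]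
  subgμ : Subgaussian μ
  subgμ₀ : Subgaussian μ₀
  mean_zero : ∫ x, x ∂μ = 0
  mean_zero₀ : ∫ x, x ∂μ₀ = 0
  var_one : ∫ x, x ^ 2 ∂μ = 1
  A : (n : ℕ) → Ω → Matrix (Fin n) (Fin n) ℝ
  meas : ∀ (n : ℕ) (i j : Fin n), Measurable fun ω => A n ω i j
  symm : ∀ (n : ℕ) (ω : Ω), (A n ω).IsSymm
  indep : ∀ n : ℕ, ProbabilityTheory.iIndepFun
    (fun (p : {p : Fin n × Fin n // p.1 ≤ p.2}) (ω : Ω) => A n ω p.1.1 p.1.2) P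
  dist_diag : ∀ (n : ℕ) (i : Fin n),
    MeasureTheory.Measure.map (fun ω => Real.sqrt n * A n ω i i) P = μ₀
  dist_off : ∀ (n : ℕ) (i j : Fin n), i ≠ j →
    MeasureTheory.Measure.map (fun ω => Real.sqrt n * A n ω i j) P = μ

attribute [instance] MatrixModel.mΩ MatrixModel.probP MatrixModel.probμ MatrixModel.probμ₀

open MeasureTheory ProbabilityTheory Filter

/-! ### Branches of trees, Hermite polynomials, and the asymptotic Gaussian space -/

/-- The diagram's graph with all edges incident to the root removed. -/
def Diagram.offRoot (α : Diagram) : SimpleGraph α.V := α.graph.deleteEdges {e | α.root ∈ e}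

/-- The set of vertices belonging to the branch hanging at a root-neighbour `c`. -/
def Diagram.branchSet (α : Diagram) (c : α.V) : Set α.V := {v | α.offRoot.Reachable c v}

/-- The branch of `α` at a root-neighbour `c`, as a rooted diagram (the root is kept). -/
def Diagram.branchAt (α : Diagram) (c : α.V) : Diagram where
  V := {v : α.V // v = α.root ∨ v ∈ α.branchSet c}
  fintypeV := Fintype.ofFinite _
  decEqV := inferInstance
  root := ⟨α.root, Or.inl rfl⟩
  edges := (α.edges.filter fun e => ∃ v, v ∈ e ∧ v ∈ α.branchSet c).map
    (Sym2.map fun v =>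
      if h : v = α.root ∨ v ∈ α.branchSet c then
        (⟨v, h⟩ : {v : α.V // v = α.root ∨ v ∈ α.branchSet c})
      else ⟨α.root, Or.inl rfl⟩)
  edges2 := (α.edges2.filter fun e => ∃ v, v ∈ e ∧ v ∈ α.branchSet c).map
    (Sym2.map fun v =>
      if h : v = α.root ∨ v ∈ α.branchSet c then
        (⟨v, h⟩ : {v : α.V // v = α.root ∨ v ∈ α.branchSet c})
      else ⟨α.root, Or.inl rfl⟩)

/-- `d_σ(τ)`: the number of branches of the root of `τ` isomorphic to `σ ∈ 𝒮`. -/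
def dcount (τ σ : Diagram) : ℕ :=
  Nat.card {c : τ.V // τ.graph.Adj τ.root c ∧ DiagIso (τ.branchAt c) σ}

/-- The monic orthogonal (generalized Hermite) polynomials for `N(0, v)`:
`h_0 = 1`, `h_1 = x`, `h_{k+2} = x·h_{k+1} - v·(k+1)·h_k`. -/
def hermiteVar (v : ℝ) : ℕ → ℝ → ℝ
  | 0, _ => 1
  | 1, x => x
  | k + 2, x => x * hermiteVar v (k + 1) x - v * ((k : ℝ) + 1) * hermiteVar v k x

/-- Given an enumeration `rep` of representatives of the isomorphism classes of `𝒮`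
and a family `G` of corresponding (Gaussian) random variables, the asymptotic random
variable `Z_τ^∞ = ∏_σ h_{d_σ(τ)}(Z_σ^∞; |Aut σ|)` attached to a rooted tree `τ ∈ 𝒯`. -/
def ZinfTree {Ω' : Type} (rep : ℕ → Diagram) (G : ℕ → Ω' → ℝ) (τ : Diagram) (ω : Ω') : ℝ :=
  ∏ᶠ m : ℕ, hermiteVar (autCard (rep m)) (dcount τ (rep m)) (G m ω)

/-- `τ⁺`: extend the root by one edge. -/
def plusD (τ : Diagram) : Diagram where
  V := Option τ.V
  fintypeV := inferInstance
  decEqV := inferInstance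
  root := none
  edges := τ.edges.map (Sym2.map fun v => (some v : Option τ.V)) +
    {s((none : Option τ.V), some τ.root)}
  edges2 := τ.edges2.map (Sym2.map fun v => (some v : Option τ.V))

/-- `σ⁻` for a root of degree 1 with neighbour `c`: delete the root and its unique
edge, re-rooting at `c`. -/
def minusDAux (τ : Diagram) (c : τ.V) (hc : c ≠ τ.root) : Diagram where
  V := {v : τ.V // v ≠ τ.root}
  fintypeV := Fintype.ofFinite _
  decEqV := inferInstance
  root := ⟨c, hc⟩
  edges := (τ.edges.filter fun e => τ.root ∉ e).map
    (Sym2.map fun v => if h : v = τ.root then (⟨c, hc⟩ : {v : τ.V // v ≠ τ.root}) else ⟨v, h⟩)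
  edges2 := (τ.edges2.filter fun e => τ.root ∉ e).map
    (Sym2.map fun v => if h : v = τ.root then (⟨c, hc⟩ : {v : τ.V // v ≠ τ.root}) else ⟨v, h⟩)

/-- `τ⁻` (total version; meaningful when the root has degree exactly one). -/
def minusD (τ : Diagram) : Diagram :=
  if h : τ.RootDeg1 then minusDAux τ h.choose h.choose_spec.1 else τ

/-! ### Removal of hanging double edges -/

/-- Remove a hanging double edge `{u, v}` (where `v` is a hanging non-root vertex)
together with the vertex `v`. -/
def rmHDE (α : Diagram) (u v : α.V) (huv : u ≠ v) (hv : v ≠ α.root) : Diagram where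
  V := {w : α.V // w ≠ v}
  fintypeV := Fintype.ofFinite _
  decEqV := inferInstance
  root := ⟨α.root, fun h => hv h.symm⟩
  edges := (α.edges - Multiset.replicate 2 s(u, v)).map
    (Sym2.map fun w => if h : w = v then (⟨u, huv⟩ : {w : α.V // w ≠ v}) else ⟨w, h⟩)
  edges2 := α.edges2.map
    (Sym2.map fun w => if h : w = v then (⟨u, huv⟩ : {w : α.V // w ≠ v}) else ⟨w, h⟩)

/-- Replace a hanging double edge `{u, v}` by a single 2-labeled edge. -/
def relabelHDE (α : Diagram) (u v : α.V) : Diagram :=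
  { α with edges := α.edges - Multiset.replicate 2 s(u, v), edges2 := α.edges2 + {s(u, v)} }

/-- One step of deleting a hanging double edge (up to isomorphism). -/
def StepRemove (α β : Diagram) : Prop :=
  ∃ (u v : α.V) (huv : u ≠ v) (hv : v ≠ α.root),
    α.edges.count s(u, v) = 2 ∧ (∀ e ∈ α.edges, v ∈ e → e = s(u, v)) ∧
    (∀ e ∈ α.edges2, v ∉ e) ∧ DiagIso β (rmHDE α u v huv hv)

/-- The asymptotic random variable `Z_α^∞` of a connected diagram `α`: if repeatedly
deleting hanging double edges transforms `α` into a rooted tree `τ ∈ 𝒯` then it is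
`Z_τ^∞`, and otherwise it is `0`. -/
def ZinfGen {Ω' : Type} (rep : ℕ → Diagram) (G : ℕ → Ω' → ℝ) (α : Diagram) : Ω' → ℝ :=
  if h : ∃ τ : Diagram, Relation.ReflTransGen StepRemove α τ ∧ τ.IsTree then
    ZinfTree rep G h.choose
  else fun _ => 0

/-! ### Tree expressions -/

/-- A tree(-diagram) expression with coefficients independent of `n`. -/
abbrev TreeExpr : Type 1 := List (ℝ × Diagram)

def TreeExpr.eval (x : TreeExpr) {N : ℕ} (A : Matrix (Fin N) (Fin N) ℝ) (i : Fin N) : ℝ :=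
  (x.map fun p => p.1 * Zv A p.2 i).sum

/-- The asymptotic state attached to a tree expression. -/
def TreeExpr.inf {Ω' : Type} (rep : ℕ → Diagram) (G : ℕ → Ω' → ℝ) (x : TreeExpr) (ω : Ω') : ℝ :=
  (x.map fun p => p.1 * ZinfTree rep G p.2 ω).sum

/-- The linear operator `⁺` on tree expressions. -/
def TreeExpr.plusE (x : TreeExpr) : TreeExpr := x.map fun p => (p.1, plusD p.2)

/-- The linear operator `⁻` on tree expressions (trees whose root does not have
degree one are sent to `0`). -/
def TreeExpr.minusE (x : TreeExpr) : TreeExpr :=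
  x.flatMap fun p =>
    if h : p.2.RootDeg1 then [(p.1, minusDAux p.2 h.choose h.choose_spec.1)] else []

/-- The asymptotic Gaussian space: an enumeration `rep` of pairwise non-isomorphic
representatives of all isomorphism classes of `𝒮`, together with a family `G m i`
(`m` = class, `i` = coordinate) of independent centered Gaussians with variances
`|Aut(rep m)|`. -/
structure SRep {Ω' : Type} [MeasurableSpace Ω'] (P' : Measure Ω') (rep : ℕ → Diagram)
    (G : ℕ → ℕ → Ω' → ℝ) : Prop where
  mem : ∀ m, (rep m).InS
  pairwise : ∀ m m', m ≠ m' → ¬ DiagIso (rep m) (rep m')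
  complete : ∀ σ : Diagram, σ.InS → ∃ m, DiagIso σ (rep m)
  meas : ∀ m i, Measurable (G m i)
  dist : ∀ m i, Measure.map (G m i) P' = gaussianReal 0 (autCard (rep m) : NNReal)
  indep : iIndepFun (fun p : ℕ × ℕ => G p.1 p.2) P'

/-- As `SRep`, with a single coordinate. -/
structure SRep1 {Ω' : Type} [MeasurableSpace Ω'] (P' : Measure Ω') (rep : ℕ → Diagram)
    (G : ℕ → Ω' → ℝ) : Prop where
  mem : ∀ m, (rep m).InS
  pairwise : ∀ m m', m ≠ m' → ¬ DiagIso (rep m) (rep m')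
  complete : ∀ σ : Diagram, σ.InS → ∃ m, DiagIso σ (rep m)
  meas : ∀ m, Measurable (G m)
  dist : ∀ m, Measure.map (G m) P' = gaussianReal 0 (autCard (rep m) : NNReal)
  indep : iIndepFun G P'

/-! ### Products of tree diagrams by matchings of branches -/

/-- Index type of the branches of a family of rooted trees. -/
abbrev BIdx {q : ℕ} (τ : Fin q → Diagram) : Type := Σ j : Fin q, (τ j).V

/-- A partial matching of pairwise-isomorphic root-branches of `τ 0, …, τ (q-1)` with
no two matched branches from the same tree. -/
def IsBMatch {q : ℕ} (τ : Fin q → Diagram) (M : Finset (Sym2 (BIdx τ))) : Prop :=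
  (∀ p ∈ M, ¬ p.IsDiag) ∧
  (∀ p ∈ M, ∀ p' ∈ M, p ≠ p' → ∀ b : BIdx τ, b ∈ p → b ∉ p') ∧
  (∀ b b' : BIdx τ, s(b, b') ∈ M →
    b.1 ≠ b'.1 ∧ (τ b.1).graph.Adj (τ b.1).root b.2 ∧ (τ b'.1).graph.Adj (τ b'.1).root b'.2 ∧
      DiagIso ((τ b.1).branchAt b.2) ((τ b'.1).branchAt b'.2))

/-- `|Aut(σ)|` for a matched pair of isomorphic branches. -/
def pairAut {q : ℕ} (τ : Fin q → Diagram) : Sym2 (BIdx τ) → ℕ :=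
  Sym2.lift ⟨fun b b' => max (autCard ((τ b.1).branchAt b.2)) (autCard ((τ b'.1).branchAt b'.2)),
    fun b b' => max_comm _ _⟩

def matchCoeff {q : ℕ} (τ : Fin q → Diagram) (M : Finset (Sym2 (BIdx τ))) : ℝ :=
  ∏ p ∈ M, (pairAut τ p : ℝ)

/-- A vertex belonging to a matched (hence deleted) branch. -/
def BDeleted {q : ℕ} (τ : Fin q → Diagram) (M : Finset (Sym2 (BIdx τ))) (v : BIdx τ) : Prop :=
  ∃ p ∈ M, ∃ c : (τ v.1).V, (⟨v.1, c⟩ : BIdx τ) ∈ p ∧ v.2 ∈ (τ v.1).branchSet c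

/-- `τ_M`: merge the roots of `τ 0, …, τ (q-1)` and delete all branches matched in `M`. -/
def mergedTree {q : ℕ} (τ : Fin q → Diagram) (M : Finset (Sym2 (BIdx τ))) : Diagram where
  V := Option {v : BIdx τ // v.2 ≠ (τ v.1).root ∧ ¬ BDeleted τ M v}
  fintypeV := Fintype.ofFinite _
  decEqV := inferInstance
  root := none
  edges := (Finset.univ : Finset (Fin q)).val.bind fun j =>
    ((τ j).edges.filter fun e => ∀ w, w ∈ e → w = (τ j).root ∨ ¬ BDeleted τ M ⟨j, w⟩).map
      (Sym2.map fun w =>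
        if h : w ≠ (τ j).root ∧ ¬ BDeleted τ M ⟨j, w⟩ then
          (some ⟨⟨j, w⟩, h⟩ : Option {v : BIdx τ // v.2 ≠ (τ v.1).root ∧ ¬ BDeleted τ M v})
        else none)
  edges2 := 0

/-- The product of a list of tree diagrams (with coefficients), expanded over all
matchings of isomorphic root-branches. -/
def treeListProd (l : List (ℝ × Diagram)) : TreeExpr :=
  ((Finset.univ : Finset (Finset (Sym2 (BIdx fun j : Fin l.length => (l.get j).2)))).filter
      (IsBMatch fun j : Fin l.length => (l.get j).2)).toList.map
    fun M => ((l.map Prod.fst).prod * matchCoeff _ M, mergedTree _ M)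

def scaleTE (c : ℝ) (x : TreeExpr) : TreeExpr := x.map fun p => (c * p.1, p.2)

/-- Application of a polynomial to tree expressions, expanding each monomial via the
matching-product of tree diagrams. -/
def applyPoly {k : ℕ} (f : MvPolynomial (Fin k) ℝ) (xs : Fin k → TreeExpr) : TreeExpr :=
  f.support.toList.flatMap fun d =>
    (List.sections ((List.finRange k).flatMap fun s => List.replicate (d s) (xs s))).flatMap
      fun choice => scaleTE (MvPolynomial.coeff d f) (treeListProd choice)

/-! ### General first-order methods -/

/-- One step of a GFOM: multiply by `A`, or apply a polynomial of the previous states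
componentwise. -/
inductive GFOMStep : ℕ → Type where
  | matmul : {t : ℕ} → GFOMStep t
  | nonlin : {t : ℕ} → MvPolynomial (Fin (t + 1)) ℝ → GFOMStep t

/-- The state `x_t ∈ ℝⁿ` of a GFOM with input matrix `A`; in a `nonlin` step with
polynomial `f`, coordinate `s` of `f` receives `x_{t-s}`. -/
def gfomState {n : ℕ} (steps : (t : ℕ) → GFOMStep t) (A : Matrix (Fin n) (Fin n) ℝ) :
    ℕ → Fin n → ℝ
  | 0 => fun _ => 1
  | t + 1 =>
    match steps t with
    | GFOMStep.matmul => A.mulVec (gfomState steps A t)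
    | GFOMStep.nonlin f => fun i =>
        MvPolynomial.eval (fun s : Fin (t + 1) => gfomState steps A (t - (s : ℕ)) i) f
  termination_by t => t
  decreasing_by all_goals omega

/-- The singleton diagram (representing the all-ones vector). -/
def singletonD : Diagram where
  V := PUnit
  fintypeV := inferInstance
  decEqV := inferInstance
  root := PUnit.unit
  edges := 0
  edges2 := 0

/-- Multiplication by `A` on the trees: `Z_τ ↦ Z_{τ⁺} (+ Z_{τ⁻}` if `τ ∈ 𝒮)`. -/
def stepMul (x : TreeExpr) : TreeExpr :=
  x.flatMap fun p =>
    (p.1, plusD p.2) ::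
      (if h : p.2.RootDeg1 then [(p.1, minusDAux p.2 h.choose h.choose_spec.1)] else [])

/-- The tree approximation `x̂_t` of a GFOM: the GFOM operations performed on the
tree diagrams only. -/
def hatState (steps : (t : ℕ) → GFOMStep t) : ℕ → TreeExpr
  | 0 => [(1, singletonD)]
  | t + 1 =>
    match steps t with
    | GFOMStep.matmul => stepMul (hatState steps t)
    | GFOMStep.nonlin f => applyPoly f fun s : Fin (t + 1) => hatState steps (t - (s : ℕ))
  termination_by t => t
  decreasing_by all_goals omega

/-! ### Belief propagation and approximate message passing -/

/-- Belief propagation messages `m^t_{i→j}` for the nonlinearities `f`; in `f t`,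
coordinate `s ≤ t-1` receives `∑_{k≠j} A_{ik} m^{t-1-s}_{k→i}`, and the last
coordinate receives `m⁰ = 1`. -/
def bpMsg {n : ℕ} (f : (t : ℕ) → MvPolynomial (Fin (t + 1)) ℝ)
    (A : Matrix (Fin n) (Fin n) ℝ) : ℕ → Fin n → Fin n → ℝ
  | 0 => fun _ _ => 1
  | t + 1 => fun i j =>
      MvPolynomial.eval (fun s : Fin (t + 2) =>
        if (s : ℕ) ≤ t then ∑ k ∈ Finset.univ.erase j, A i k * bpMsg f A (t - (s : ℕ)) k i
        else 1) (f (t + 1))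
  termination_by t => t
  decreasing_by all_goals omega

/-- Belief propagation output `m^t_i`. -/
def bpOut {n : ℕ} (f ftil : (t : ℕ) → MvPolynomial (Fin (t + 1)) ℝ)
    (A : Matrix (Fin n) (Fin n) ℝ) (t : ℕ) (i : Fin n) : ℝ :=
  MvPolynomial.eval (fun s : Fin (t + 1) =>
    if (s : ℕ) < t then ∑ k, A i k * bpMsg f A (t - 1 - (s : ℕ)) k i else 1) (ftil t)

/-- The AMP iterates `w^t` with Onsager correction; in `f t`, coordinate `s`
receives `w^{t-s}`. -/
def ampW {n : ℕ} (f : (t : ℕ) → MvPolynomial (Fin (t + 1)) ℝ)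
    (A : Matrix (Fin n) (Fin n) ℝ) : ℕ → Fin n → ℝ
  | 0 => fun _ => 1
  | t + 1 => fun i =>
      A.mulVec (fun k =>
        MvPolynomial.eval (fun s : Fin (t + 1) => ampW f A (t - (s : ℕ)) k) (f t)) i -
      ∑ s : Fin (t + 1),
        (if 1 ≤ (s : ℕ) then
          ((1 / (n : ℝ)) * ∑ k : Fin n,
            MvPolynomial.eval (fun r : Fin (t + 1) => ampW f A (t - (r : ℕ)) k)
              (MvPolynomial.pderiv (⟨t - (s : ℕ), by omega⟩ : Fin (t + 1)) (f t))) *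
          MvPolynomial.eval
            (fun r : Fin (((s : ℕ) - 1) + 1) => ampW f A (((s : ℕ) - 1) - (r : ℕ)) i)
            (f ((s : ℕ) - 1))
        else 0)
  termination_by t => t
  decreasing_by all_goals omega

/-- The AMP output `m^t = f̃_t(w^t, …, w^0)`. -/
def ampOut {n : ℕ} (f ftil : (t : ℕ) → MvPolynomial (Fin (t + 1)) ℝ)
    (A : Matrix (Fin n) (Fin n) ℝ) (t : ℕ) (i : Fin n) : ℝ :=
  MvPolynomial.eval (fun s : Fin (t + 1) => ampW f A (t - (s : ℕ)) i) (ftil t)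

/-! ### Connected components of scalar diagrams -/

def SDiagram.compSet (ρ : SDiagram) (v : ρ.V) : Set ρ.V := {w | ρ.graph.Reachable v w}

/-- The connected component of `v` in `ρ` is isomorphic to the scalar diagram `τ`. -/
def CompIso (ρ : SDiagram) (v : ρ.V) (τ : SDiagram) : Prop :=
  ∃ ψ : τ.V → ρ.V, Function.Injective ψ ∧ Set.range ψ = ρ.compSet v ∧
    τ.edges.map (Sym2.map ψ) = ρ.edges.filter (fun e => ∀ w ∈ e, w ∈ ρ.compSet v) ∧
    τ.edges2.map (Sym2.map ψ) = ρ.edges2.filter (fun e => ∀ w ∈ e, w ∈ ρ.compSet v)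

/-- The number of connected components of `ρ` isomorphic to `τ`. -/
def compCount (ρ τ : SDiagram) : ℕ :=
  Nat.card {K : ρ.graph.ConnectedComponent //
    ∃ v : ρ.V, ρ.graph.connectedComponentMk v = K ∧ CompIso ρ v τ}

/-- The number of connected components of a scalar diagram. -/
def numComps (ρ : SDiagram) : ℕ := Nat.card ρ.graph.ConnectedComponent

/-! ### Debiased power iteration -/

/-- Debiased power iteration: `x₀ = 1`, `x₁ = A·1`, `x_{t+2} = A·x_{t+1} - x_t`. -/
def dpi {n : ℕ} (A : Matrix (Fin n) (Fin n) ℝ) : ℕ → Fin n → ℝ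
  | 0 => fun _ => 1
  | 1 => A.mulVec fun _ => 1
  | t + 2 => fun i => A.mulVec (dpi A (t + 1)) i - dpi A t i

/-- The path with `t` edges, rooted at one endpoint. -/
def pathD (t : ℕ) : Diagram where
  V := Fin (t + 1)
  fintypeV := inferInstance
  decEqV := inferInstance
  root := 0
  edges := (Finset.univ : Finset (Fin t)).val.map fun k =>
    s((k.castSucc : Fin (t + 1)), (k.succ : Fin (t + 1)))
  edges2 := 0


/-- A term which is combinatorially negligible or of combinatorial order 1. -/
def TermOrderLE1 (p : (ℕ → ℝ) × Diagram) : Prop :=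
  NegligibleTerm p.1 p.2 ∨ Order1Term p.1 p.2

/-! Over a rooted embedding `φ`, the summand of `Z_{α,i}` is the product of the entries on the
edge set `φ(E(α))`, a square-free monomial in independent centred entries; it has mean zero, and
two such monomials are orthogonal unless their edge sets coincide, in which case the product has
mean `n^{-|E(α)|}`. So `E[Z_{α,i}²]` is `n^{-|E(α)|}` times the number of pairs `(φ, ψ)` with
`φ(E) = ψ(E)`. Since no non-root vertex is isolated, `φ(E) = ψ(E)` forces `ψ = φ ∘ g` for a
unique root-fixing automorphism `g`, and there are `(n-1)⋯(n-|V(α)|+1)` choices of `φ`. -/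

theorem Finset.prod_mul_prod_eq_prod_union_pow {ι M : Type*} [CommMonoid M] [DecidableEq ι]
    (S T : Finset ι) (f : ι → M) :
    (∏ p ∈ S, f p) * ∏ p ∈ T, f p =
      ∏ p ∈ S ∪ T, f p ^ ((if p ∈ S then 1 else 0) + if p ∈ T then 1 else 0) := by
  simp only [pow_add, pow_ite, pow_one, pow_zero, Finset.prod_mul_distrib, Finset.prod_ite_mem,
    Finset.union_inter_cancel_left, Finset.union_inter_cancel_right]

theorem MeasureTheory.MemLp.integrable_pow {Ω : Type*} [MeasurableSpace Ω] {P : Measure Ω}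
    [IsFiniteMeasure P] {X : Ω → ℝ} (hX : MemLp X 2 P) {k : ℕ} (hk : k ≤ 2) :
    Integrable (fun ω => X ω ^ k) P := by
  interval_cases k
  · simp
  · simpa using hX.integrable one_le_two
  · exact hX.integrable_sq

namespace ProbabilityTheory.iIndepFun

variable {Ω ι : Type*} [MeasurableSpace Ω] {P : Measure Ω} {X : ι → Ω → ℝ}

theorem integrable_finset_prod (hX : iIndepFun X P) (hmeas : ∀ p, Measurable (X p))
    {T : Finset ι} (hint : ∀ p ∈ T, Integrable (X p) P) :
    Integrable (fun ω => ∏ p ∈ T, X p ω) P := by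
  have := hX.isProbabilityMeasure
  induction T using Finset.cons_induction with
  | empty => simp
  | cons a T ha ih =>
    have hind : IndepFun (X a) (∏ p ∈ T, X p) P :=
      (hX.indepFun_finsetProd_of_notMem hmeas ha).symm
    have hT : Integrable (∏ p ∈ T, X p) P := by
      simpa only [← Finset.prod_apply] using ih fun p hp => hint p (Finset.mem_cons_of_mem hp)
    have hprod : (fun ω => ∏ p ∈ Finset.cons a T ha, X p ω) = X a * ∏ p ∈ T, X p := by
      ext ω
      simp only [Finset.prod_cons, Pi.mul_apply, Finset.prod_apply]
    rw [hprod]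
    exact hind.integrable_mul (hint a (Finset.mem_cons_self a T)) hT

theorem integral_finset_prod (hX : iIndepFun X P) (hmeas : ∀ p, Measurable (X p))
    (T : Finset ι) : ∫ ω, ∏ p ∈ T, X p ω ∂P = ∏ p ∈ T, ∫ ω, X p ω ∂P := by
  have h := (hX.precomp (g := ((↑) : T → ι)) Subtype.val_injective)
    |>.integral_fun_prod_eq_prod_integral fun p => (hmeas p).aestronglyMeasurable
  rw [← Finset.prod_coe_sort, ← h]
  simp_rw [← Finset.prod_coe_sort T]

theorem integral_finset_prod_mul_finset_prod [DecidableEq ι] (hX : iIndepFun X P)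
    (hmeas : ∀ p, Measurable (X p)) {S T : Finset ι} (hmean : ∀ p ∈ S ∪ T, ∫ ω, X p ω ∂P = 0) :
    ∫ ω, (∏ p ∈ S, X p ω) * ∏ p ∈ T, X p ω ∂P =
      if S = T then ∏ p ∈ S, ∫ ω, X p ω ^ 2 ∂P else 0 := by
  set k : ι → ℕ := fun p => (if p ∈ S then 1 else 0) + if p ∈ T then 1 else 0
  have hXk : iIndepFun (fun p ω => X p ω ^ k p) P :=
    hX.comp (fun p x => x ^ k p) fun p => measurable_id.pow_const _
  simp_rw [Finset.prod_mul_prod_eq_prod_union_pow]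
  rw [hXk.integral_finset_prod fun p => (hmeas p).pow_const _]
  split_ifs with hST
  · subst hST
    refine Finset.prod_congr (Finset.union_self S) fun p hp => ?_
    simp [k, hp]
  · obtain ⟨p, hp⟩ : ∃ p, ¬(p ∈ S ↔ p ∈ T) := by
      simpa only [Finset.ext_iff, not_forall] using hST
    have hpST : p ∈ S ∪ T := by grind
    have hk : k p = 1 := by grind
    exact Finset.prod_eq_zero hpST (by rw [hk]; simpa using hmean p hpST)

theorem integrable_finset_prod_mul_finset_prod [DecidableEq ι] (hX : iIndepFun X P)
    (hmeas : ∀ p, Measurable (X p)) {S T : Finset ι} (hL2 : ∀ p ∈ S ∪ T, MemLp (X p) 2 P) :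
    Integrable (fun ω => (∏ p ∈ S, X p ω) * ∏ p ∈ T, X p ω) P := by
  have := hX.isProbabilityMeasure
  set k : ι → ℕ := fun p => (if p ∈ S then 1 else 0) + if p ∈ T then 1 else 0
  have hXk : iIndepFun (fun p ω => X p ω ^ k p) P :=
    hX.comp (fun p x => x ^ k p) fun p => measurable_id.pow_const _
  simp_rw [Finset.prod_mul_prod_eq_prod_union_pow]
  exact hXk.integrable_finset_prod (fun p => (hmeas p).pow_const _) fun p hp =>
    (hL2 p hp).integrable_pow (by grind)

variable {κ : Type*} (G : Finset κ) (s : κ → Finset ι)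

theorem integral_sum_finset_prod (hX : iIndepFun X P) (hmeas : ∀ p, Measurable (X p))
    (hint : ∀ φ ∈ G, ∀ p ∈ s φ, Integrable (X p) P)
    (hmean : ∀ φ ∈ G, ∀ p ∈ s φ, ∫ ω, X p ω ∂P = 0) (hne : ∀ φ ∈ G, (s φ).Nonempty) :
    ∫ ω, ∑ φ ∈ G, ∏ p ∈ s φ, X p ω ∂P = 0 := by
  rw [integral_finsetSum _ fun φ hφ => hX.integrable_finset_prod hmeas (hint φ hφ)]
  refine Finset.sum_eq_zero fun φ hφ => ?_
  rw [hX.integral_finset_prod hmeas]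
  obtain ⟨p, hp⟩ := hne φ hφ
  exact Finset.prod_eq_zero hp (hmean φ hφ p hp)

theorem integral_sq_sum_finset_prod [DecidableEq ι] (hX : iIndepFun X P)
    (hmeas : ∀ p, Measurable (X p))
    (hL2 : ∀ φ ∈ G, ∀ p ∈ s φ, MemLp (X p) 2 P)
    (hmean : ∀ φ ∈ G, ∀ p ∈ s φ, ∫ ω, X p ω ∂P = 0) :
    ∫ ω, (∑ φ ∈ G, ∏ p ∈ s φ, X p ω) ^ 2 ∂P =
      ∑ φ ∈ G, ∑ ψ ∈ G, if s φ = s ψ then ∏ p ∈ s φ, ∫ ω, X p ω ^ 2 ∂P else 0 := by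
  have hunion {φ ψ : κ} (hφ : φ ∈ G) (hψ : ψ ∈ G) {Q : ι → Prop}
      (hQ : ∀ φ ∈ G, ∀ p ∈ s φ, Q p) : ∀ p ∈ s φ ∪ s ψ, Q p := fun p hp =>
    (Finset.mem_union.mp hp).elim (hQ φ hφ p) (hQ ψ hψ p)
  conv_lhs => enter [2, ω]; rw [sq, Finset.sum_mul_sum]
  rw [integral_finsetSum _ fun φ hφ => integrable_finsetSum _ fun ψ hψ =>
    hX.integrable_finset_prod_mul_finset_prod hmeas (hunion hφ hψ hL2)]
  refine Finset.sum_congr rfl fun φ hφ => ?_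
  rw [integral_finsetSum _ fun ψ hψ =>
    hX.integrable_finset_prod_mul_finset_prod hmeas (hunion hφ hψ hL2)]
  exact Finset.sum_congr rfl fun ψ hψ =>
    hX.integral_finset_prod_mul_finset_prod hmeas (hunion hφ hψ hmean)

end ProbabilityTheory.iIndepFun

theorem sym2val_comp {U V : Type} {N : ℕ} (A : Matrix (Fin N) (Fin N) ℝ) (ψ : V → Fin N)
    (φ : U → V) (e : Sym2 U) : sym2val A (ψ ∘ φ) e = sym2val A ψ (e.map φ) := by
  induction e using Sym2.ind with
  | _ a b => rfl

namespace MatrixModel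

variable (M : MatrixModel)

def entry (n : ℕ) (e : Sym2 (Fin n)) (ω : M.Ω) : ℝ := sym2val (M.A n ω) id e

theorem entry_mk {n : ℕ} (a b : Fin n) (ω : M.Ω) : M.entry n s(a, b) ω = M.A n ω a b := by
  simp only [entry, sym2val, Sym2.lift_mk, id, (M.symm n ω).apply a b]
  ring

theorem measurable_entry (n : ℕ) (e : Sym2 (Fin n)) : Measurable (M.entry n e) := by
  induction e using Sym2.ind with
  | _ a b => simpa only [← M.entry_mk] using M.meas n a b

theorem iIndepFun_entry (n : ℕ) : iIndepFun (M.entry n) M.P := by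
  have h : M.entry n = fun e ω => M.A n ω (Sym2.sortEquiv e).1.1 (Sym2.sortEquiv e).1.2 := by
    ext e ω
    conv_lhs => rw [← Sym2.sortEquiv.symm_apply_apply e]
    exact M.entry_mk _ _ ω
  rw [h]
  exact (M.indep n).precomp Sym2.sortEquiv.injective

theorem memLp_two_id_μ : MemLp id 2 M.μ :=
  (memLp_two_iff_integrable_sq aestronglyMeasurable_id).2
    (.of_integral_ne_zero (by simp [M.var_one]))

theorem hasLaw_sqrt_mul_entry {n : ℕ} {e : Sym2 (Fin n)} (he : ¬ e.IsDiag) :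
    HasLaw (fun ω => √n * M.entry n e ω) M.μ M.P := by
  induction e using Sym2.ind with
  | _ a b =>
    simp only [M.entry_mk]
    exact ⟨((M.meas n a b).const_mul _).aemeasurable, M.dist_off n a b (by simpa using he)⟩

variable {M}

theorem entry_eq_inv_sqrt_mul {n : ℕ} (e : Sym2 (Fin n)) :
    M.entry n e = fun ω => (√n)⁻¹ * (√n * M.entry n e ω) := by
  have hn : (√n : ℝ) ≠ 0 := by
    induction e using Sym2.ind with
    | _ a b => exact Real.sqrt_ne_zero'.2 (by exact_mod_cast a.pos)
  ext ω
  field_simp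

theorem memLp_entry {n : ℕ} {e : Sym2 (Fin n)} (he : ¬ e.IsDiag) :
    MemLp (M.entry n e) 2 M.P := by
  rw [entry_eq_inv_sqrt_mul e]
  refine MemLp.const_mul ?_ _
  have h := M.hasLaw_sqrt_mul_entry he
  have hμ := M.memLp_two_id_μ
  rw [← h.map_eq] at hμ
  exact (memLp_map_measure_iff aestronglyMeasurable_id h.aemeasurable).1 hμ

theorem integral_entry {n : ℕ} {e : Sym2 (Fin n)} (he : ¬ e.IsDiag) :
    ∫ ω, M.entry n e ω ∂M.P = 0 := by
  rw [entry_eq_inv_sqrt_mul e, integral_const_mul, (M.hasLaw_sqrt_mul_entry he).integral_eq,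
    M.mean_zero, mul_zero]

theorem integral_entry_sq {n : ℕ} {e : Sym2 (Fin n)} (he : ¬ e.IsDiag) :
    ∫ ω, M.entry n e ω ^ 2 ∂M.P = (n : ℝ)⁻¹ := by
  have h := (M.hasLaw_sqrt_mul_entry he).integral_comp (f := fun x => x ^ 2) (by fun_prop)
  simp only [Function.comp_def, mul_pow, integral_const_mul, Real.sq_sqrt (Nat.cast_nonneg n),
    M.var_one] at h
  exact eq_inv_of_mul_eq_one_right h

end MatrixModel

theorem Fintype.card_filter_injective_apply_eq {V β : Type*} [Fintype V] [DecidableEq V]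
    [Fintype β] [DecidableEq β] (r : V) (b : β) :
    (Finset.univ.filter fun φ : V → β => Function.Injective φ ∧ φ r = b).card =
      (Fintype.card β - 1).descFactorial (Fintype.card V - 1) := by
  rw [← Fintype.card_subtype]
  have e : {φ : V → β // Function.Injective φ ∧ φ r = b} ≃ ({v // v ≠ r} ↪ {c // c ≠ b}) :=
    { toFun := fun φ => ⟨fun v => ⟨φ.1 v, fun h => v.2 (φ.2.1 (h.trans φ.2.2.symm))⟩,
        fun v w h => Subtype.ext (φ.2.1 (congrArg Subtype.val h))⟩
      invFun := fun f => ⟨fun v => if h : v = r then b else f ⟨v, h⟩,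
        Function.Injective.dite (· = r) (f := fun _ => b)
          (fun x y _ => Subtype.ext (x.2.trans y.2.symm))
          (Subtype.val_injective.comp f.injective) fun h => (f _).2 h.symm,
        dif_pos rfl⟩
      left_inv := fun φ => by
        ext v
        by_cases hv : v = r
        · simp [hv, φ.2.2]
        · simp only [hv, dite_false]
          rfl
      right_inv := fun f => by
        ext v
        simp [v.2] }
  rw [Fintype.card_congr e, Fintype.card_embedding_eq]
  simp [Fintype.card_subtype_compl]

namespace Diagram

variable (α : Diagram) {n : ℕ}

def rootedEmbeddings (i : Fin n) : Finset (α.V → Fin n) :=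
  Finset.univ.filter fun φ => Function.Injective φ ∧ φ α.root = i

def edgeImage (φ : α.V → Fin n) : Finset (Sym2 (Fin n)) := (α.edges.map (Sym2.map φ)).toFinset

variable {α}

theorem card_rootedEmbeddings (i : Fin n) :
    (α.rootedEmbeddings i).card = (n - 1).descFactorial (Fintype.card α.V - 1) := by
  rw [rootedEmbeddings, Fintype.card_filter_injective_apply_eq, Fintype.card_fin]

theorem mem_rootedEmbeddings {i : Fin n} {φ : α.V → Fin n} :
    φ ∈ α.rootedEmbeddings i ↔ Function.Injective φ ∧ φ α.root = i := by
  simp [rootedEmbeddings]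

theorem nodup_map_edges (hα : α.Proper) {φ : α.V → Fin n} (hφ : Function.Injective φ) :
    (α.edges.map (Sym2.map φ)).Nodup :=
  hα.1.map (Sym2.map.injective hφ)

theorem card_edgeImage (hα : α.Proper) {φ : α.V → Fin n} (hφ : Function.Injective φ) :
    (α.edgeImage φ).card = Multiset.card α.edges := by
  rw [edgeImage, Multiset.toFinset_card_of_nodup (nodup_map_edges hα hφ), Multiset.card_map]

theorem not_isDiag_of_mem_edgeImage (hα : α.Proper) {φ : α.V → Fin n}
    (hφ : Function.Injective φ) {e : Sym2 (Fin n)} (he : e ∈ α.edgeImage φ) : ¬ e.IsDiag := by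
  obtain ⟨e', he', rfl⟩ := Multiset.mem_map.1 (Multiset.mem_toFinset.1 he)
  rw [Sym2.isDiag_map hφ]
  exact hα.2.1 e' he'

theorem edgeImage_nonempty (hE : α.edges ≠ 0) (φ : α.V → Fin n) : (α.edgeImage φ).Nonempty := by
  simpa [edgeImage, Multiset.toFinset_nonempty] using hE

theorem edgeImage_comp {φ : α.V → Fin n} {g : α.V → α.V}
    (hg : α.edges.map (Sym2.map g) = α.edges) : α.edgeImage (φ ∘ g) = α.edgeImage φ := by
  rw [edgeImage, edgeImage, Sym2.map_comp, ← Multiset.map_map, hg]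

theorem Zv_eq_sum_rootedEmbeddings (hα : α.Proper) (A : Matrix (Fin n) (Fin n) ℝ) (i : Fin n) :
    Zv A α i = ∑ φ ∈ α.rootedEmbeddings i, ∏ e ∈ α.edgeImage φ, sym2val A id e := by
  rw [Zv, rootedEmbeddings, Finset.sum_filter]
  refine Finset.sum_congr rfl fun φ _ => ?_
  split_ifs with hφ
  · rw [hα.2.2, Multiset.map_zero, Multiset.prod_zero, mul_one, Finset.prod_eq_multiset_prod,
      edgeImage, Multiset.toFinset_val, Multiset.dedup_eq_self.2 (nodup_map_edges hα hφ.1),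
      Multiset.map_map]
    exact congrArg _ (Multiset.map_congr rfl fun e _ => sym2val_comp A id φ e)
  · rfl

variable {i : Fin n}

/-- Every non-root vertex lies on an edge, so the image of `ψ` lies in that of `φ`. -/
theorem exists_aut_comp_eq (hαn : α.NoIsolated) (hα : α.Proper) {φ ψ : α.V → Fin n}
    (hφ : φ ∈ α.rootedEmbeddings i) (hψ : ψ ∈ α.rootedEmbeddings i)
    (h : α.edgeImage φ = α.edgeImage ψ) :
    ∃ g : Equiv.Perm α.V, (g α.root = α.root ∧ α.edges.map (Sym2.map g) = α.edges ∧
      α.edges2.map (Sym2.map g) = α.edges2) ∧ φ ∘ g = ψ := by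
  rw [mem_rootedEmbeddings] at hφ hψ
  have hmap : α.edges.map (Sym2.map φ) = α.edges.map (Sym2.map ψ) :=
    (nodup_map_edges hα hφ.1).toFinset_inj (nodup_map_edges hα hψ.1) h
  have hrange : ∀ v, ∃ u, φ u = ψ v := by
    intro v
    by_cases hv : v = α.root
    · exact ⟨α.root, by rw [hφ.2, hv, hψ.2]⟩
    obtain ⟨e, he, hve⟩ := hαn v hv
    rw [allE, hα.2.2, add_zero] at he
    obtain ⟨e', -, he'⟩ := Multiset.mem_map.1 (hmap ▸ Multiset.mem_map_of_mem (Sym2.map ψ) he)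
    obtain ⟨u, -, hu⟩ := Sym2.mem_map.1 (he' ▸ Sym2.mem_map.2 ⟨v, hve, rfl⟩)
    exact ⟨u, hu⟩
  choose g hg using hrange
  have hginj : Function.Injective g := fun v w hvw => hψ.1 (by rw [← hg v, ← hg w, hvw])
  let σ : Equiv.Perm α.V := Equiv.ofBijective g (Finite.injective_iff_bijective.1 hginj)
  have hσ : φ ∘ σ = ψ := funext hg
  refine ⟨σ, ⟨hφ.1 ((hg _).trans (hψ.2.trans hφ.2.symm)), ?_, by simp [hα.2.2]⟩, hσ⟩
  refine Multiset.map_injective (Sym2.map.injective hφ.1) ?_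
  rw [Multiset.map_map, ← Sym2.map_comp, hσ, hmap]

theorem card_filter_edgeImage_eq (hαn : α.NoIsolated) (hα : α.Proper) {φ : α.V → Fin n}
    (hφ : φ ∈ α.rootedEmbeddings i) :
    ((α.rootedEmbeddings i).filter fun ψ => α.edgeImage φ = α.edgeImage ψ).card = autCard α := by
  have hφ' := mem_rootedEmbeddings.1 hφ
  let F : {g : Equiv.Perm α.V // g α.root = α.root ∧ α.edges.map (Sym2.map g) = α.edges ∧
      α.edges2.map (Sym2.map g) = α.edges2} →
      (α.rootedEmbeddings i).filter fun ψ => α.edgeImage φ = α.edgeImage ψ := fun g =>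
    ⟨φ ∘ g.1, Finset.mem_filter.2 ⟨mem_rootedEmbeddings.2 ⟨hφ'.1.comp g.1.injective,
      (congrArg φ g.2.1).trans hφ'.2⟩, (edgeImage_comp g.2.2.1).symm⟩⟩
  have hF : Function.Bijective F := by
    refine ⟨fun g g' hgg' => Subtype.ext (Equiv.ext fun v => hφ'.1 ?_), fun ψ => ?_⟩
    · exact congrFun (congrArg Subtype.val hgg') v
    obtain ⟨hψ, hψφ⟩ := Finset.mem_filter.1 ψ.2
    obtain ⟨g, hg, hgψ⟩ := exists_aut_comp_eq hαn hα hφ hψ hψφ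
    exact ⟨⟨g, hg⟩, Subtype.ext hgψ⟩
  rw [autCard, Nat.card_eq_of_bijective F hF, Nat.card_eq_finsetCard]

theorem sum_sum_ite_edgeImage_eq (hαn : α.NoIsolated) (hα : α.Proper)
    {f : Finset (Sym2 (Fin n)) → ℝ} {c : ℝ}
    (hf : ∀ φ ∈ α.rootedEmbeddings i, f (α.edgeImage φ) = c) :
    (∑ φ ∈ α.rootedEmbeddings i, ∑ ψ ∈ α.rootedEmbeddings i,
      if α.edgeImage φ = α.edgeImage ψ then f (α.edgeImage φ) else 0) =
      (n - 1).descFactorial (Fintype.card α.V - 1) * autCard α * c := by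
  rw [Finset.sum_congr rfl fun φ hφ => by
      rw [Finset.sum_ite, Finset.sum_const_zero, add_zero, Finset.sum_const,
        card_filter_edgeImage_eq hαn hα hφ, hf φ hφ],
    Finset.sum_const, card_rootedEmbeddings, nsmul_eq_mul, nsmul_eq_mul, mul_assoc]

end Diagram

theorem Nat.cast_descFactorial_sub_one {n : ℕ} (hn : 1 ≤ n) (m : ℕ) :
    ((n - 1).descFactorial m : ℝ) = ∏ k ∈ Finset.range m, ((n : ℝ) - ((k : ℝ) + 1)) := by
  rw [← descPochhammer_eval_eq_descFactorial, descPochhammer_eval_eq_prod_range, Nat.cast_sub hn]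
  refine Finset.prod_congr rfl fun k _ => ?_
  push_cast
  ring

/-- mean zero and the exact variance of a proper Fourier diagram. -/
theorem statement_14 (M : MatrixModel) (n : ℕ) (α : Diagram) (hαn : α.NoIsolated)
    (hα : α.Proper) (hsing : α.edges ≠ 0) (i : Fin n) :
    (∫ ω, Zv (M.A n ω) α i ∂M.P) = 0 ∧
    (∫ ω, Zv (M.A n ω) α i ^ 2 ∂M.P) =
      (autCard α : ℝ) *
        (∏ k ∈ Finset.range (Fintype.card α.V - 1), ((n : ℝ) - ((k : ℝ) + 1))) /
        (n : ℝ) ^ Multiset.card α.edges := by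
  have hZ : ∀ ω, Zv (M.A n ω) α i =
      ∑ φ ∈ α.rootedEmbeddings i, ∏ e ∈ α.edgeImage φ, M.entry n e ω := fun ω =>
    α.Zv_eq_sum_rootedEmbeddings hα (M.A n ω) i
  have hoff : ∀ φ ∈ α.rootedEmbeddings i, ∀ e ∈ α.edgeImage φ, ¬ e.IsDiag := fun φ hφ _ he =>
    Diagram.not_isDiag_of_mem_edgeImage hα (Diagram.mem_rootedEmbeddings.1 hφ).1 he
  have hindep := M.iIndepFun_entry n
  simp_rw [hZ]
  refine ⟨hindep.integral_sum_finset_prod _ _ (M.measurable_entry n)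
    (fun φ hφ e he => (MatrixModel.memLp_entry (hoff φ hφ e he)).integrable one_le_two)
    (fun φ hφ e he => MatrixModel.integral_entry (hoff φ hφ e he))
    (fun φ _ => Diagram.edgeImage_nonempty hsing φ), ?_⟩
  rw [hindep.integral_sq_sum_finset_prod _ _ (M.measurable_entry n)
      (fun φ hφ e he => MatrixModel.memLp_entry (hoff φ hφ e he))
      (fun φ hφ e he => MatrixModel.integral_entry (hoff φ hφ e he)),
    Diagram.sum_sum_ite_edgeImage_eq hαn hα (f := fun S => ∏ e ∈ S, ∫ ω, M.entry n e ω ^ 2 ∂M.P)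
      (c := (n : ℝ)⁻¹ ^ Multiset.card α.edges) fun φ hφ => by
        rw [Finset.prod_congr rfl fun e he => MatrixModel.integral_entry_sq (hoff φ hφ e he),
          Finset.prod_const, Diagram.card_edgeImage hα (Diagram.mem_rootedEmbeddings.1 hφ).1],
    Nat.cast_descFactorial_sub_one i.pos]
  ring
end
end

section
/- Let M(d,d,d,d) denote the set of perfect matchings on a set of 4d elements partitioned into four blocks of size d each, such that no two elements of the same block are matched to each other. Then there exist constants c > 0 and C > 0 such that for all integers d ≥ 1, |M(d,d,d,d)| ≥ c·d^{−C}·3^d·(d!)². -/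
set_option linter.unusedVariables false

open scoped Classical BigOperators

noncomputable section

open MeasureTheory ProbabilityTheory Filter

/-! Pairing every element of blocks `0, 1` bijectively with an element of blocks `2, 3` gives
`(2d)!` admissible matchings, and `(2d)! = binom(2d, d) (d!)² ≥ 4^d (d!)² / (2d)`. -/

section CrossMatching

variable {X ι A B : Type*}

/-- Perfect matchings are encoded as fixed-point-free involutions. -/
def IsCrossMatching (blk : X → ι) (g : Equiv.Perm X) : Prop :=
  Function.Involutive g ∧ (∀ x, g x ≠ x) ∧ ∀ x, blk (g x) ≠ blk x

def Equiv.sumCross (f : A ≃ B) : Equiv.Perm (A ⊕ B) :=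
  (Equiv.sumCongr f f.symm).trans (Equiv.sumComm B A)

@[simp]
theorem Equiv.sumCross_inl (f : A ≃ B) (a : A) : f.sumCross (.inl a) = .inr (f a) := rfl

@[simp]
theorem Equiv.sumCross_inr (f : A ≃ B) (b : B) : f.sumCross (.inr b) = .inl (f.symm b) := rfl

theorem Equiv.sumCross_involutive (f : A ≃ B) : Function.Involutive f.sumCross := by
  rintro (a | b) <;> simp

theorem Equiv.isLeft_sumCross (f : A ≃ B) (z : A ⊕ B) :
    (f.sumCross z).isLeft = !z.isLeft := by
  cases z <;> rfl

theorem Equiv.sumCross_injective : Function.Injective (Equiv.sumCross : (A ≃ B) → _) := by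
  intro f f' h
  ext a
  simpa using congr($h (.inl a))

theorem isCrossMatching_permCongr_sumCross {blk : X → ι} (e : A ⊕ B ≃ X)
    (hside : ∀ z w, blk (e z) = blk (e w) → z.isLeft = w.isLeft) (f : A ≃ B) :
    IsCrossMatching blk (e.permCongr f.sumCross) := by
  have hblk : ∀ x, blk (e.permCongr f.sumCross x) ≠ blk x := by
    intro x hx
    have := hside (f.sumCross (e.symm x)) (e.symm x) (by simpa using hx)
    exact Bool.not_ne_self _ ((f.isLeft_sumCross _).symm.trans this)
  refine ⟨fun x => ?_, fun x hx => hblk x (congrArg blk hx), hblk⟩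
  simp [Equiv.sumCross_involutive f (e.symm x)]

theorem card_equiv_le_card_crossMatching [Finite X] {blk : X → ι} (e : A ⊕ B ≃ X)
    (hside : ∀ z w, blk (e z) = blk (e w) → z.isLeft = w.isLeft) :
    Nat.card (A ≃ B) ≤ Nat.card {g // IsCrossMatching blk g} :=
  Nat.card_le_card_of_injective
    (fun f => ⟨e.permCongr f.sumCross, isCrossMatching_permCongr_sumCross e hside f⟩)
    fun _ _ h => Equiv.sumCross_injective (e.permCongr.injective (congrArg Subtype.val h))

end CrossMatching

open Nat

theorem four_pow_mul_factorial_sq_le (d : ℕ) (hd : 0 < d) :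
    4 ^ d * d ! ^ 2 ≤ 2 * d * (2 * d)! := by
  have hfac : (2 * d)! = Nat.centralBinom d * d ! * d ! := by
    have := Nat.choose_mul_factorial_mul_factorial (show d ≤ 2 * d by omega)
    rwa [show 2 * d - d = d by omega, ← Nat.centralBinom_eq_two_mul_choose, eq_comm] at this
  calc 4 ^ d * d ! ^ 2 ≤ 2 * d * Nat.centralBinom d * d ! ^ 2 :=
        Nat.mul_le_mul_right _ (Nat.four_pow_le_two_mul_self_mul_centralBinom d hd)
    _ = 2 * d * (2 * d)! := by rw [hfac]; ring

/-- Blocks `0, 1` of `Fin 4` go to the left summand, blocks `2, 3` to the right one. -/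
def blockSplit (d : ℕ) : (Fin 2 × Fin d) ⊕ (Fin 2 × Fin d) ≃ Fin 4 × Fin d :=
  (Equiv.sumProdDistrib _ _ _).symm.trans (Equiv.prodCongr finSumFinEquiv (Equiv.refl _))

theorem isLeft_eq_of_blockSplit_fst_eq (d : ℕ) (z w : (Fin 2 × Fin d) ⊕ (Fin 2 × Fin d))
    (h : (blockSplit d z).1 = (blockSplit d w).1) : z.isLeft = w.isLeft := by
  rcases z with ⟨i, _⟩ | ⟨i, _⟩ <;> rcases w with ⟨j, _⟩ | ⟨j, _⟩ <;>
    simp [blockSplit, Fin.ext_iff] at h ⊢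

/-- the number of perfect matchings of four blocks of size `d` with no
pair inside a block is at least `c·d^{-C}·3^d·(d!)²`. -/
theorem statement_19 :
    ∃ c C : ℝ, 0 < c ∧ 0 < C ∧ ∀ d : ℕ, 1 ≤ d →
      c * (d : ℝ) ^ (-C) * 3 ^ d * (Nat.factorial d : ℝ) ^ 2 ≤
        (Nat.card {g : Equiv.Perm (Fin 4 × Fin d) //
            Function.Involutive g ∧ (∀ x, g x ≠ x) ∧ ∀ x, (g x).1 ≠ x.1} : ℝ) := by
  refine ⟨1 / 2, 1, by norm_num, by norm_num, fun d hd => ?_⟩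
  have hcount : (2 * d)! ≤ Nat.card {g // IsCrossMatching (Prod.fst : Fin 4 × Fin d → Fin 4) g} := by
    have := card_equiv_le_card_crossMatching (blockSplit d) (isLeft_eq_of_blockSplit_fst_eq d)
    rwa [← Equiv.Perm, Nat.card_perm, Nat.card_eq_fintype_card, Fintype.card_prod,
      Fintype.card_fin, Fintype.card_fin] at this
  have hbound : (4 : ℝ) ^ d * d ! ^ 2 ≤ 2 * d * (2 * d)! := by
    exact_mod_cast four_pow_mul_factorial_sq_le d hd
  have hd' : (0 : ℝ) < d := by exact_mod_cast hd
  rw [Real.rpow_neg_one, show (1 / 2 : ℝ) * (d : ℝ)⁻¹ * 3 ^ d * d ! ^ 2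
    = 3 ^ d * d ! ^ 2 / (2 * d) by field_simp, div_le_iff₀ (by positivity)]
  calc (3 : ℝ) ^ d * (d ! : ℝ) ^ 2 ≤ 4 ^ d * (d ! : ℝ) ^ 2 := by gcongr; norm_num
    _ ≤ 2 * d * ((2 * d)! : ℝ) := hbound
    _ ≤ 2 * d * (Nat.card {g // IsCrossMatching (Prod.fst : Fin 4 × Fin d → Fin 4) g} : ℝ) := by
      exact_mod_cast Nat.mul_le_mul_left _ hcount
    _ = _ := mul_comm _ _
end
end
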